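/- arXiv:0808.3651 — 4 statements merged into one kernel-verified Lean document; each statement's English description precedes it below -/
import Mathlib

section
/- Let M be a probabilistic automaton, R ⊆ S × S, and (s1,s2) ∈ R with L(s1)=L(s2) and Act(s1) ⊆ Act(s2). Fix α ∈ Act(s1) with Steps_α(s2) = {μ1,…,μk}, k > 0, and a transition s1 →α μ. Then there exists a combined transition s2 ⇒α μc (i.e., μc = Σᵢ cᵢ μᵢ for some c₁,…,c_k ∈ [0,1] with Σᵢcᵢ=1) with μ ⊑_R μc if and only if the following system of linear constraints is feasible: Σᵢ cᵢ = 1; 0 ≤ cᵢ ≤ 1 for all i; 0 ≤ f_{(s,t)} ≤ 1 for all (s,t) ∈ R⊥; μ(s) = Σ_{t : (s,t)∈R⊥} f_{(s,t)} for all s ∈ S⊥; and Σ_{s : (s,t)∈R⊥} f_{(s,t)} = Σᵢ cᵢ μᵢ(t) for all t ∈ S⊥. -/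
open Finset

variable {S : Type*} [Fintype S]

/-- Extension of a sub-distribution on `S` to `S⊥ = Option S`
(`none` plays the role of `⊥`, carrying the deficit mass). -/
def ext (μ : S → ℝ) : Option S → ℝ
  | some s => μ s
  | none => 1 - ∑ s, μ s

/-- `R⊥ = R ∪ {(⊥, s) | s ∈ S⊥}`. -/
def Rbot (R : Set (S × S)) (a b : Option S) : Prop :=
  (∃ s t, a = some s ∧ b = some t ∧ (s, t) ∈ R) ∨ a = none

/-- `Δ` is a weight function for `(μ, μ')` with respect to `R`:
`Δ : S⊥ × S⊥ → [0,1]`, positivity of `Δ(s,s')` implies `(s,s') ∈ R⊥`,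
rows sum to `μ`, columns sum to `μ'`. -/
def IsWeight (R : Set (S × S)) (μ μ' : S → ℝ) (Δ : Option S → Option S → ℝ) : Prop :=
  (∀ a b, 0 ≤ Δ a b ∧ Δ a b ≤ 1) ∧
  (∀ a b, 0 < Δ a b → Rbot R a b) ∧
  (∀ a, ext μ a = ∑ b, Δ a b) ∧
  (∀ b, ext μ' b = ∑ a, Δ a b)

/-- `μ ⊑_R μ'`: there exists a weight function for `(μ, μ')` w.r.t. `R`. -/
def Lift (R : Set (S × S)) (μ μ' : S → ℝ) : Prop :=
  ∃ Δ, IsWeight R μ μ' Δ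

variable {Act AP : Type*}

/-- `s ⇒α μ` is a combined transition: `μ` is a convex combination of
`α`-successor distributions of `s`. -/
def Combined (trans : S → Act → Set (S → ℝ)) (s : S) (α : Act) (μ : S → ℝ) : Prop :=
  ∃ (k : ℕ) (c : Fin k → ℝ) (ν : Fin k → S → ℝ),
    0 < k ∧ (∀ i, ν i ∈ trans s α) ∧ (∀ i, 0 ≤ c i ∧ c i ≤ 1) ∧
    (∑ i, c i) = 1 ∧ ∀ t, μ t = ∑ i, c i * ν i t

/-- `R` is a strong simulation on the probabilistic automaton. -/
def IsStrongSimPA (trans : S → Act → Set (S → ℝ)) (L : S → Set AP)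
    (R : Set (S × S)) : Prop :=
  ∀ p ∈ R, L p.1 = L p.2 ∧
    ∀ α μ₁, μ₁ ∈ trans p.1 α → ∃ μ₂ ∈ trans p.2 α, Lift R μ₁ μ₂

/-- `R` is a strong probabilistic simulation on the probabilistic automaton. -/
def IsStrongProbSimPA (trans : S → Act → Set (S → ℝ)) (L : S → Set AP)
    (R : Set (S × S)) : Prop :=
  ∀ p ∈ R, L p.1 = L p.2 ∧
    ∀ α μ₁, μ₁ ∈ trans p.1 α → ∃ μ₂, Combined trans p.2 α μ₂ ∧ Lift R μ₁ μ₂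

open scoped Classical

/-! A combined transition is a convex combination of finitely many `α`-successors, possibly
listed with repetitions; summing the coefficients over each fibre of the enumeration
`μ₁, …, μₖ` turns it into a convex combination of the `μᵢ`. A weight function may be taken
to vanish off `R⊥`, so it is the same as an LP variable `f` indexed by `R⊥`. With the
coefficients fixed, the column constraints of the LP are the column sums of a weight
function for `(μ, Σᵢ cᵢ μᵢ)`, because extension to `S⊥` commutes with convex combinations. -/

theorem sum_mul_comp_eq_sum_fiberwise {ι κ R : Type*} [Fintype ι] [Fintype κ] [DecidableEq κ]
    [NonUnitalNonAssocSemiring R] (c : ι → R) (j : ι → κ) (g : κ → R) :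
    ∑ i, c i * g (j i) = ∑ m, (∑ i with j i = m, c i) * g m := by
  rw [← sum_fiberwise univ j]
  refine sum_congr rfl fun m _ => ?_
  rw [sum_mul]
  exact sum_congr rfl fun i hi => by rw [(mem_filter.1 hi).2]

theorem sum_filter_eq_sum_of_pos_imp {ι M : Type*} [AddCommMonoid M] [PartialOrder M]
    {s : Finset ι} {p : ι → Prop} [DecidablePred p] {f : ι → M}
    (hf : ∀ x, 0 ≤ f x) (hp : ∀ x, 0 < f x → p x) :
    ∑ x ∈ s with p x, f x = ∑ x ∈ s, f x :=
  sum_filter_of_ne fun x _ hx => hp x ((hf x).lt_of_ne' hx)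

theorem ext_sum_mul {ι : Type*} [Fintype ι] {c : ι → ℝ} (hc : ∑ i, c i = 1)
    (ν : ι → S → ℝ) (b : Option S) :
    ext (fun t => ∑ i, c i * ν i t) b = ∑ i, c i * ext (ν i) b := by
  cases b with
  | some t => rfl
  | none =>
    change 1 - ∑ t, ∑ i, c i * ν i t = ∑ i, c i * (1 - ∑ t, ν i t)
    simp only [mul_sub, mul_one, sum_sub_distrib, hc, mul_sum]
    rw [sum_comm]

theorem combined_iff_of_eq_range {T : Type*} {trans : T → Act → Set (T → ℝ)} {s : T} {α : Act}
    {k : ℕ} (hk : 0 < k) {μs : Fin k → T → ℝ} (henum : trans s α = Set.range μs) (μc : T → ℝ) :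
    Combined trans s α μc ↔
      ∃ c : Fin k → ℝ, (∑ i, c i) = 1 ∧ (∀ i, 0 ≤ c i ∧ c i ≤ 1) ∧
        ∀ t, μc t = ∑ i, c i * μs i t := by
  constructor
  · rintro ⟨k', c', ν, -, hν, hc'01, hc'1, hμc⟩
    choose j hj using fun i => (henum ▸ hν i : ν i ∈ Set.range μs)
    set c : Fin k → ℝ := fun m => ∑ i with j i = m, c' i
    have hc0 : ∀ m, 0 ≤ c m := fun m => sum_nonneg fun i _ => (hc'01 i).1
    have hc1 : ∑ m, c m = 1 := (sum_fiberwise univ j c').trans hc'1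
    refine ⟨c, hc1, fun m => ⟨hc0 m, hc1 ▸ single_le_sum (fun m _ => hc0 m) (mem_univ m)⟩,
      fun t => ?_⟩
    rw [hμc t, ← sum_mul_comp_eq_sum_fiberwise c' j (μs · t)]
    simp only [hj]
  · rintro ⟨c, hc1, hc01, hμc⟩
    exact ⟨k, c, μs, hk, fun i => henum ▸ Set.mem_range_self i, hc01, hc1, hμc⟩

theorem lift_iff_exists_rbot_weight (R : Set (S × S)) (μ μ' : S → ℝ) :
    Lift R μ μ' ↔
      ∃ f : Option S → Option S → ℝ,
        (∀ a b, Rbot R a b → 0 ≤ f a b ∧ f a b ≤ 1) ∧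
        (∀ a, ext μ a = ∑ b with Rbot R a b, f a b) ∧
        (∀ b, ∑ a with Rbot R a b, f a b = ext μ' b) := by
  constructor
  · rintro ⟨Δ, hΔ01, hΔpos, hrow, hcol⟩
    refine ⟨Δ, fun a b _ => hΔ01 a b, fun a => ?_, fun b => ?_⟩
    · rw [hrow, sum_filter_eq_sum_of_pos_imp (fun b => (hΔ01 a b).1) (hΔpos a)]
    · rw [hcol, sum_filter_eq_sum_of_pos_imp (fun a => (hΔ01 a b).1) (hΔpos · b)]
  · rintro ⟨f, hf01, hrow, hcol⟩
    refine ⟨fun a b => if Rbot R a b then f a b else 0, fun a b => ?_, fun a b hpos => ?_,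
      fun a => by rw [hrow, sum_filter], fun b => by rw [← hcol, sum_filter]⟩
    · dsimp only
      split_ifs with h
      exacts [hf01 a b h, ⟨le_rfl, zero_le_one⟩]
    · by_contra h
      simp [h] at hpos

theorem combined_weight_iff_LP_general (trans : S → Act → Set (S → ℝ))
    (R : Set (S × S)) (s₂ : S)
    (α : Act) (k : ℕ) (hk : 0 < k) (μs : Fin k → S → ℝ)
    (henum : trans s₂ α = Set.range μs)
    (μ : S → ℝ) :
    (∃ μc : S → ℝ, Combined trans s₂ α μc ∧ Lift R μ μc) ↔
    (∃ (c : Fin k → ℝ) (f : Option S → Option S → ℝ),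
      (∑ i, c i) = 1 ∧
      (∀ i, 0 ≤ c i ∧ c i ≤ 1) ∧
      (∀ a b, Rbot R a b → 0 ≤ f a b ∧ f a b ≤ 1) ∧
      (∀ a : Option S, ext μ a = ∑ b ∈ Finset.univ.filter (fun b => Rbot R a b), f a b) ∧
      (∀ b : Option S, (∑ a ∈ Finset.univ.filter (fun a => Rbot R a b), f a b) =
        ∑ i, c i * ext (μs i) b)) := by
  constructor
  · rintro ⟨μc, hcomb, hlift⟩
    obtain ⟨c, hc1, hc01, hμc⟩ := (combined_iff_of_eq_range hk henum μc).1 hcomb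
    obtain rfl : μc = fun t => ∑ i, c i * μs i t := funext hμc
    obtain ⟨f, hf01, hrow, hcol⟩ := (lift_iff_exists_rbot_weight R μ _).1 hlift
    exact ⟨c, f, hc1, hc01, hf01, hrow, fun b => (hcol b).trans (ext_sum_mul hc1 μs b)⟩
  · rintro ⟨c, f, hc1, hc01, hf01, hrow, hcol⟩
    refine ⟨fun t => ∑ i, c i * μs i t,
      (combined_iff_of_eq_range hk henum _).2 ⟨c, hc1, hc01, fun t => rfl⟩,
      (lift_iff_exists_rbot_weight R μ _).2
        ⟨f, hf01, hrow, fun b => (hcol b).trans (ext_sum_mul hc1 μs b).symm⟩⟩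

/-- existence of a combined transition `s₂ ⇒α μc` with
`μ ⊑_R μc` is equivalent to feasibility of the LP of Lemma 4.10. -/
theorem combined_weight_iff_LP (trans : S → Act → Set (S → ℝ)) (L : S → Set AP)
    (R : Set (S × S)) (s₁ s₂ : S) (hR : (s₁, s₂) ∈ R) (hL : L s₁ = L s₂)
    (hAct : ∀ a : Act, (trans s₁ a).Nonempty → (trans s₂ a).Nonempty)
    (α : Act) (k : ℕ) (hk : 0 < k) (μs : Fin k → S → ℝ)
    (henum : trans s₂ α = Set.range μs)
    (μ : S → ℝ) (hμ : μ ∈ trans s₁ α)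
    (hμ0 : ∀ t, 0 ≤ μ t) (hμ1 : ∑ t, μ t ≤ 1)
    (hμs0 : ∀ i t, 0 ≤ μs i t) (hμs1 : ∀ i, ∑ t, μs i t ≤ 1) :
    (∃ μc : S → ℝ, Combined trans s₂ α μc ∧ Lift R μ μc) ↔
    (∃ (c : Fin k → ℝ) (f : Option S → Option S → ℝ),
      (∑ i, c i) = 1 ∧
      (∀ i, 0 ≤ c i ∧ c i ≤ 1) ∧
      (∀ a b, Rbot R a b → 0 ≤ f a b ∧ f a b ≤ 1) ∧
      (∀ a : Option S, ext μ a = ∑ b ∈ Finset.univ.filter (fun b => Rbot R a b), f a b) ∧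
      (∀ b : Option S, (∑ a ∈ Finset.univ.filter (fun a => Rbot R a b), f a b) =
        ∑ i, c i * ext (μs i) b)) :=
  combined_weight_iff_LP_general trans R s₂ α k hk μs henum μ
end

section
/- In a network N = (V,E,c) with designated subsets MU1 of source-adjacent vertices and MU2 of sink-adjacent vertices, if there exists a flow f saturating all edges 𝓈→u1 (u1 ∈ MU1) and all edges ū2→𝓉 (u2 ∈ MU2), then there exists a maximum flow with the same saturation property. (Augmenting the valid flow to a maximum flow preserves saturation of these edges.) -/
open Finset

variable {V : Type*} [Fintype V]

/-- `f` is a flow on the finite network `(V, c)` with source `s` and sink `t`: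
capacity constraints, antisymmetry, and conservation at internal vertices. -/
def IsFlow (c : V → V → ℝ) (s t : V) (f : V → V → ℝ) : Prop :=
  (∀ v w, f v w ≤ c v w) ∧
  (∀ v w, f v w = - f w v) ∧
  (∀ v, v ≠ s → v ≠ t → (∑ u, f u v) = 0)

/-- The value of a flow: the net outflow of the source. -/
def flowValue (s : V) (f : V → V → ℝ) : ℝ := ∑ w, f s w

/-- `f` saturates all source edges into `MU1` and all sink edges from `MU2`. -/
def Valid (c : V → V → ℝ) (s t : V) (MU1 MU2 : Set V) (f : V → V → ℝ) : Prop :=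
  (∀ u ∈ MU1, f s u = c s u) ∧ (∀ u ∈ MU2, f u t = c u t)

/-!
Valid flows form a nonempty compact set, so one of them, `f`, has maximal value. Call a residual
edge of `f` augmenting if it neither enters `s` nor leaves `t`. If `t` is reachable from `s` along
augmenting edges, pushing a small amount of flow along such a path gives a flow of larger value
that is still valid: the path uses no saturated edge, and no edge into `s` or out of `t`.
Otherwise the vertices reachable from `s` form a cut that `f` saturates, so `f` is a maximum flow.
-/

open Relation

lemma sum_sum_eq_zero_of_antisymm {ι : Type*} (S : Finset ι) {g : ι → ι → ℝ}
    (hg : ∀ v w, g v w = -g w v) : ∑ v ∈ S, ∑ w ∈ S, g v w = 0 := by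
  have h : ∑ v ∈ S, ∑ w ∈ S, g v w = -∑ v ∈ S, ∑ w ∈ S, g w v := by
    simp only [← sum_neg_distrib, ← hg]
  rw [sum_comm (f := fun v w => g w v)] at h
  linarith

lemma flowValue_eq_neg_sum_inflow {s : V} {f : V → V → ℝ} (hskew : ∀ v w, f v w = -f w v) :
    flowValue s f = -∑ u, f u s := by
  simp only [flowValue, ← sum_neg_distrib, ← hskew]

namespace IsFlow

variable {c f : V → V → ℝ} {s t : V}

lemma sum_outflow_eq_zero (hf : IsFlow c s t f) {v : V} (hvs : v ≠ s) (hvt : v ≠ t) :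
    ∑ w, f v w = 0 := by
  have h := flowValue_eq_neg_sum_inflow (s := v) hf.2.1
  rw [flowValue] at h
  rw [h, hf.2.2 v hvs hvt, neg_zero]

lemma flowValue_eq_sum_cut [DecidableEq V] (hf : IsFlow c s t f) {S : Finset V} (hs : s ∈ S)
    (ht : t ∉ S) : flowValue s f = ∑ v ∈ S, ∑ w ∈ Sᶜ, f v w := by
  have hout : ∑ v ∈ S, ∑ w, f v w = flowValue s f :=
    sum_eq_single_of_mem s hs fun v hv hvs =>
      hf.sum_outflow_eq_zero hvs fun hvt => ht (hvt ▸ hv)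
  rw [← hout]
  simp_rw [← sum_add_sum_compl S, sum_add_distrib,
    sum_sum_eq_zero_of_antisymm S hf.2.1, zero_add]

end IsFlow

def AugmentingEdge (c : V → V → ℝ) (s t : V) (f : V → V → ℝ) (v w : V) : Prop :=
  f v w < c v w ∧ w ≠ s ∧ v ≠ t

lemma IsFlow.flowValue_le_of_not_reachable {c f g : V → V → ℝ} {s t : V}
    (hf : IsFlow c s t f) (hreach : ¬ ReflTransGen (AugmentingEdge c s t f) s t)
    (hg : IsFlow c s t g) : flowValue s g ≤ flowValue s f := by
  classical
  set S := univ.filter (ReflTransGen (AugmentingEdge c s t f) s)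
  have hs : s ∈ S := by simp [S, ReflTransGen.refl]
  have ht : t ∉ S := by simpa [S] using hreach
  have hsat : ∀ v ∈ S, ∀ w ∈ Sᶜ, f v w = c v w := by
    intro v hv w hw
    by_contra hne
    have hvw : AugmentingEdge c s t f v w :=
      ⟨(hf.1 v w).lt_of_ne hne, fun h => by simp [h ▸ hs] at hw, fun h => ht (h ▸ hv)⟩
    simp only [S, mem_compl, mem_filter, mem_univ, true_and] at hv hw
    exact hw (hv.tail hvw)
  rw [hf.flowValue_eq_sum_cut hs ht, hg.flowValue_eq_sum_cut hs ht]
  gcongr with v hv w hw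
  exact hsat v hv w hw ▸ hg.1 v w

lemma Relation.ReflTransGen.exists_unit_flow [DecidableEq V] {r : V → V → Prop} {s x : V}
    (h : ReflTransGen r s x) :
    ∃ p : V → V → ℝ, (∀ v w, p v w = -p w v) ∧
      (∀ v, ∑ u, p u v = (if v = x then 1 else 0) - (if v = s then 1 else 0)) ∧
      ∀ v w, 0 < p v w → r v w := by
  induction h with
  | refl => exact ⟨0, by simp, by simp, by simp⟩
  | @tail y x _ hyx ih =>
    obtain ⟨p, hskew, hcons, hpos⟩ := ih
    refine ⟨fun v w => p v w + (if v = y ∧ w = x then 1 else 0) - (if v = x ∧ w = y then 1 else 0),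
      fun v w => ?_, fun v => ?_, fun v w hvw => ?_⟩
    · simp only [hskew v w, and_comm (a := w = y), and_comm (a := w = x)]
      ring
    · simp only [sum_sub_distrib, sum_add_distrib, hcons, ite_and,
        sum_ite_eq', mem_univ, if_true]
      ring
    · by_cases hvw' : v = y ∧ w = x
      · exact hvw'.1 ▸ hvw'.2 ▸ hyx
      · simp only [hvw', if_false] at hvw
        exact hpos v w (by split_ifs at hvw <;> linarith)

lemma exists_pos_mul_le_of_finite {ι : Type*} [Finite ι] {p d : ι → ℝ} (hd : ∀ i, 0 ≤ d i)
    (h : ∀ i, 0 < p i → 0 < d i) : ∃ ε > 0, ∀ i, ε * p i ≤ d i := by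
  have hev : ∀ᶠ ε in nhdsWithin (0 : ℝ) (Set.Ioi 0), ∀ i, ε * p i ≤ d i := by
    refine Filter.eventually_all.2 fun i => ?_
    rcases (hd i).lt_or_eq with hdi | hdi
    · have : Filter.Tendsto (fun ε : ℝ => ε * p i) (nhds 0) (nhds 0) :=
        (by fun_prop : Continuous fun ε : ℝ => ε * p i).tendsto' 0 0 (zero_mul _)
      exact nhdsWithin_le_nhds ((this.eventually (gt_mem_nhds hdi)).mono fun _ => le_of_lt)
    · have hpi : p i ≤ 0 := not_lt.1 fun hp => (h i hp).ne' hdi.symm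
      filter_upwards [self_mem_nhdsWithin] with ε hε
      rw [← hdi]
      exact mul_nonpos_of_nonneg_of_nonpos (le_of_lt hε) hpi
  exact (hev.and self_mem_nhdsWithin).exists.imp fun ε h => ⟨h.2, h.1⟩

section Compactness

variable (c : V → V → ℝ) (s t : V)

lemma isClosed_setOf_isFlow : IsClosed {f : V → V → ℝ | IsFlow c s t f} := by
  simp only [IsFlow, Set.ofPred_and, Set.ofPred_forall]
  refine .inter (isClosed_iInter fun v => isClosed_iInter fun w => isClosed_le (by fun_prop)
    (by fun_prop)) (.inter (isClosed_iInter fun v => isClosed_iInter fun w => isClosed_eq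
    (by fun_prop) (by fun_prop)) (isClosed_iInter fun v => isClosed_iInter fun _ =>
    isClosed_iInter fun _ => isClosed_eq (by fun_prop) (by fun_prop)))

lemma isCompact_setOf_isFlow : IsCompact {f : V → V → ℝ | IsFlow c s t f} := by
  refine (isCompact_univ_pi fun v => isCompact_univ_pi fun w =>
    isCompact_Icc (a := -c w v) (b := c v w)).of_isClosed_subset (isClosed_setOf_isFlow c s t) ?_
  intro f hf
  simp only [Set.mem_univ_pi, Set.mem_Icc]
  exact fun v w => ⟨by linarith [hf.2.1 v w, hf.1 w v], hf.1 v w⟩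

lemma isCompact_setOf_valid_flow (MU1 MU2 : Set V) :
    IsCompact {f : V → V → ℝ | IsFlow c s t f ∧ Valid c s t MU1 MU2 f} := by
  have hclosed : IsClosed {f : V → V → ℝ | Valid c s t MU1 MU2 f} := by
    simp only [Valid, Set.ofPred_and, Set.ofPred_forall]
    exact .inter (isClosed_iInter fun u => isClosed_iInter fun _ => isClosed_eq (by fun_prop)
      (by fun_prop)) (isClosed_iInter fun u => isClosed_iInter fun _ => isClosed_eq (by fun_prop)
      (by fun_prop))
  exact (isCompact_setOf_isFlow c s t).inter_right hclosed

end Compactness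

lemma continuous_flowValue (s : V) : Continuous (flowValue (V := V) s) := by
  unfold flowValue
  fun_prop

namespace IsFlow

variable {c f p : V → V → ℝ} {s t : V}

lemma add_mul (hf : IsFlow c s t f) (hskew : ∀ v w, p v w = -p w v)
    (hcons : ∀ v, v ≠ s → v ≠ t → ∑ u, p u v = 0) {ε : ℝ}
    (hcap : ∀ v w, ε * p v w ≤ c v w - f v w) :
    IsFlow c s t (fun v w => f v w + ε * p v w) := by
  refine ⟨fun v w => by linarith [hcap v w],
    fun v w => by dsimp only; rw [hf.2.1 v w, hskew v w]; ring, fun v hvs hvt => ?_⟩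
  rw [sum_add_distrib, ← mul_sum, hf.2.2 v hvs hvt, hcons v hvs hvt]
  ring

lemma exists_valid_flowValue_lt {MU1 MU2 : Set V} (hf : IsFlow c s t f)
    (hv : Valid c s t MU1 MU2 f) (hst : s ≠ t)
    (hreach : ReflTransGen (AugmentingEdge c s t f) s t) :
    ∃ g, IsFlow c s t g ∧ Valid c s t MU1 MU2 g ∧ flowValue s f < flowValue s g := by
  classical
  obtain ⟨p, hskew, hcons, hpos⟩ := hreach.exists_unit_flow
  obtain ⟨ε, hε, hcap⟩ := exists_pos_mul_le_of_finite (p := fun e : V × V => p e.1 e.2)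
    (d := fun e => c e.1 e.2 - f e.1 e.2) (fun e => sub_nonneg.2 (hf.1 _ _))
    fun e he => sub_pos.2 (hpos _ _ he).1
  have hsat : ∀ v w, f v w = c v w → p v w ≤ 0 := fun v w h =>
    not_lt.1 fun hp => (hpos v w hp).1.ne h
  have hout_s : ∀ u, 0 ≤ p s u := fun u => by
    rw [hskew]; linarith [not_lt.1 fun h => (hpos u s h).2.1 rfl]
  have hin_t : ∀ u, 0 ≤ p u t := fun u => by
    rw [hskew]; linarith [not_lt.1 fun h => (hpos t u h).2.2 rfl]
  have hvalue : flowValue s p = 1 := by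
    rw [flowValue_eq_neg_sum_inflow hskew, hcons s]
    simp [hst]
  refine ⟨fun v w => f v w + ε * p v w,
    hf.add_mul hskew (fun v hvs hvt => by simp [hcons, hvs, hvt]) fun v w => hcap (v, w),
    ⟨fun u hu => ?_, fun u hu => ?_⟩, ?_⟩
  · show f s u + ε * p s u = c s u
    rw [le_antisymm (hsat s u (hv.1 u hu)) (hout_s u), hv.1 u hu, mul_zero, add_zero]
  · show f u t + ε * p u t = c u t
    rw [le_antisymm (hsat u t (hv.2 u hu)) (hin_t u), hv.2 u hu, mul_zero, add_zero]
  · simp only [flowValue, sum_add_distrib, ← mul_sum] at hvalue ⊢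
    rw [hvalue]
    linarith

end IsFlow

theorem valid_flow_to_valid_maxflow_general (c : V → V → ℝ)
    (s t : V) (hst : s ≠ t) (MU1 MU2 : Set V)
    (h : ∃ f, IsFlow c s t f ∧ Valid c s t MU1 MU2 f) :
    ∃ f, IsFlow c s t f ∧ Valid c s t MU1 MU2 f ∧
      ∀ g, IsFlow c s t g → flowValue s g ≤ flowValue s f := by
  obtain ⟨f, ⟨hf, hv⟩, hmax⟩ := (isCompact_setOf_valid_flow c s t MU1 MU2).exists_isMaxOn h
    (continuous_flowValue s).continuousOn
  refine ⟨f, hf, hv, fun g hg => ?_⟩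
  by_cases hreach : ReflTransGen (AugmentingEdge c s t f) s t
  · obtain ⟨g', hg', hv', hlt⟩ := hf.exists_valid_flowValue_lt hv hst hreach
    exact absurd (hmax ⟨hg', hv'⟩) (not_le.2 hlt)
  · exact hf.flowValue_le_of_not_reachable hreach hg

/-- if some flow saturates all edges `s → u₁` (`u₁ ∈ MU1`) and
all edges `u₂ → t` (`u₂ ∈ MU2`), then some maximum flow does as well. -/
theorem valid_flow_to_valid_maxflow (c : V → V → ℝ) (hc : ∀ v w, 0 ≤ c v w)
    (s t : V) (hst : s ≠ t) (MU1 MU2 : Set V)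
    (h : ∃ f, IsFlow c s t f ∧ Valid c s t MU1 MU2 f) :
    ∃ f, IsFlow c s t f ∧ Valid c s t MU1 MU2 f ∧
      ∀ g, IsFlow c s t g → flowValue s g ≤ flowValue s f :=
  valid_flow_to_valid_maxflow_general c s t hst MU1 MU2 h
end

section
/- Refinement preserves coarseness: let D be a fully probabilistic system and define R₁ = {(s1,s2) | L(s1)=L(s2)} and inductively R_{i+1} = {(s1,s2) ∈ R_i | P(s1,·) ⊑_{R_i} P(s2,·)}. Then for every i, the strong simulation preorder ⊑ is contained in R_i; moreover if R_{i+1} = R_i for some i, then R_i equals the strong simulation preorder ⊑. -/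
open Finset

variable {S : Type*} [Fintype S]

variable {AP : Type*}

/-- `R` is a strong simulation on the fully probabilistic system `(S, P, L)`. -/
def IsStrongSim (P : S → S → ℝ) (L : S → Set AP) (R : Set (S × S)) : Prop :=
  ∀ p ∈ R, L p.1 = L p.2 ∧ Lift R (P p.1) (P p.2)

/-- The strong simulation preorder: the union of all strong simulations. -/
def Sim (P : S → S → ℝ) (L : S → Set AP) : Set (S × S) :=
  {p | ∃ R, IsStrongSim P L R ∧ p ∈ R}

/-- The refinement sequence: `seq 0 = {(s₁,s₂) | L s₁ = L s₂}` (this is `R₁` in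
the paper) and `seq (i+1) = {(s₁,s₂) ∈ seq i | P(s₁,·) ⊑_{seq i} P(s₂,·)}`. -/
def seq (P : S → S → ℝ) (L : S → Set AP) : ℕ → Set (S × S)
  | 0 => {p | L p.1 = L p.2}
  | n + 1 => {p | p ∈ seq P L n ∧ Lift (seq P L n) (P p.1) (P p.2)}

/-! A strong simulation `R` lies in every `seq i`: once `R ⊆ seq i`, monotonicity of the
lifting turns `P s₁ ⊑_R P s₂` into `P s₁ ⊑_{seq i} P s₂`, so `R ⊆ seq (i + 1)`.
A fixed point `seq i = seq (i + 1)` is label-respecting and satisfies the lifting condition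
with respect to itself, so it is a strong simulation and hence contained in `Sim`. -/

lemma Lift.mono {R R' : Set (S × S)} (h : R ⊆ R') {μ μ' : S → ℝ} (hl : Lift R μ μ') :
    Lift R' μ μ' := by
  obtain ⟨Δ, hbounds, hsupp, hrows, hcols⟩ := hl
  refine ⟨Δ, hbounds, fun a b hab => ?_, hrows, hcols⟩
  rcases hsupp a b hab with ⟨s, t, rfl, rfl, hst⟩ | rfl
  · exact Or.inl ⟨s, t, rfl, rfl, h hst⟩
  · exact Or.inr rfl

section Refinement

variable (P : S → S → ℝ) (L : S → Set AP)

lemma IsStrongSim.subset_sim {R : Set (S × S)} (hR : IsStrongSim P L R) : R ⊆ Sim P L :=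
  fun _ hp => ⟨R, hR, hp⟩

lemma seq_antitone : Antitone (seq P L) :=
  antitone_nat_of_succ_le fun _ _ hp => hp.1

lemma sim_subset_seq (i : ℕ) : Sim P L ⊆ seq P L i := by
  induction i with
  | zero =>
    rintro p ⟨R, hR, hp⟩
    exact (hR p hp).1
  | succ n ih =>
    rintro p ⟨R, hR, hp⟩
    exact ⟨ih ⟨R, hR, hp⟩, Lift.mono (hR.subset_sim.trans ih) (hR p hp).2⟩

lemma isStrongSim_seq_of_succ_eq {i : ℕ} (hfix : seq P L (i + 1) = seq P L i) :
    IsStrongSim P L (seq P L i) := by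
  intro p hp
  have hp_succ : p ∈ seq P L (i + 1) := hfix ▸ hp
  exact ⟨seq_antitone P L (Nat.zero_le i) hp, hp_succ.2⟩

end Refinement

theorem refinement_correct_general (P : S → S → ℝ) (L : S → Set AP) :
    (∀ i, Sim P L ⊆ seq P L i) ∧
    (∀ i, seq P L (i + 1) = seq P L i → seq P L i = Sim P L) :=
  ⟨sim_subset_seq P L, fun i hfix =>
    ((isStrongSim_seq_of_succ_eq P L hfix).subset_sim).antisymm (sim_subset_seq P L i)⟩

/-- every `seq i` is coarser than the strong simulation preorder,
and any fixed point of the refinement equals the strong simulation preorder. -/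
theorem refinement_correct (P : S → S → ℝ) (L : S → Set AP)
    (hP0 : ∀ s t, 0 ≤ P s t) (hP1 : ∀ s, ∑ t, P s t ≤ 1) :
    (∀ i, Sim P L ⊆ seq P L i) ∧
    (∀ i, seq P L (i + 1) = seq P L i → seq P L i = Sim P L) :=
  refinement_correct_general P L
end

section
/- On a Markov decision process (a probabilistic automaton where each state has at most one α-successor distribution per action α, and all successor distributions are stochastic), strong simulation and strong probabilistic simulation coincide: R is a strong simulation iff R is a strong probabilistic simulation. -/
open Finset

variable {S : Type*} [Fintype S]

variable {Act AP : Type*}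

omit [Fintype S] in
theorem Combined.of_mem {trans : S → Act → Set (S → ℝ)} {s : S} {α : Act} {μ : S → ℝ}
    (hμ : μ ∈ trans s α) : Combined trans s α μ :=
  ⟨1, fun _ => 1, fun _ => μ, one_pos, fun _ => hμ, fun _ => ⟨zero_le_one, le_rfl⟩,
    by simp, fun t => by simp⟩

omit [Fintype S] in
theorem Combined.mem_of_subsingleton {trans : S → Act → Set (S → ℝ)} {s : S} {α : Act}
    {μ : S → ℝ} (hsub : (trans s α).Subsingleton) (hμ : Combined trans s α μ) :
    μ ∈ trans s α := by
  obtain ⟨k, c, ν, hk, hν, -, hc, hμ⟩ := hμ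
  let i₀ : Fin k := ⟨0, hk⟩
  have hν_const : ∀ i, ν i = ν i₀ := fun i => hsub (hν i) (hν i₀)
  have hμ_eq : μ = ν i₀ := by
    funext t
    calc μ t = ∑ i, c i * ν i₀ t := by simp only [hμ t, hν_const]
      _ = ν i₀ t := by rw [← Finset.sum_mul, hc, one_mul]
  exact hμ_eq ▸ hν i₀

theorem IsStrongSimPA.isStrongProbSimPA {trans : S → Act → Set (S → ℝ)} {L : S → Set AP}
    {R : Set (S × S)} (h : IsStrongSimPA trans L R) : IsStrongProbSimPA trans L R := by
  intro p hp
  obtain ⟨hL, hstep⟩ := h p hp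
  refine ⟨hL, fun α μ₁ hμ₁ => ?_⟩
  obtain ⟨μ₂, hμ₂, hlift⟩ := hstep α μ₁ hμ₁
  exact ⟨μ₂, .of_mem hμ₂, hlift⟩

theorem IsStrongProbSimPA.isStrongSimPA {trans : S → Act → Set (S → ℝ)} {L : S → Set AP}
    {R : Set (S × S)} (hsub : ∀ s α, (trans s α).Subsingleton)
    (h : IsStrongProbSimPA trans L R) : IsStrongSimPA trans L R := by
  intro p hp
  obtain ⟨hL, hstep⟩ := h p hp
  refine ⟨hL, fun α μ₁ hμ₁ => ?_⟩
  obtain ⟨μ₂, hμ₂, hlift⟩ := hstep α μ₁ hμ₁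
  exact ⟨μ₂, hμ₂.mem_of_subsingleton (hsub _ α), hlift⟩

theorem mdp_strongSim_iff_strongProbSim_general (trans : S → Act → Set (S → ℝ))
    (L : S → Set AP)
    (hUnique : ∀ s α μ ν, μ ∈ trans s α → ν ∈ trans s α → μ = ν)
    (R : Set (S × S)) :
    IsStrongSimPA trans L R ↔ IsStrongProbSimPA trans L R :=
  ⟨IsStrongSimPA.isStrongProbSimPA,
    IsStrongProbSimPA.isStrongSimPA fun s α _ hμ _ hν => hUnique s α _ _ hμ hν⟩

/-- on an MDP (at most one `α`-successor distribution per state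
and action, each of which is stochastic), strong simulation and strong
probabilistic simulation coincide. -/
theorem mdp_strongSim_iff_strongProbSim (trans : S → Act → Set (S → ℝ))
    (L : S → Set AP)
    (hUnique : ∀ s α μ ν, μ ∈ trans s α → ν ∈ trans s α → μ = ν)
    (hStoch : ∀ s α μ, μ ∈ trans s α → (∀ t, 0 ≤ μ t) ∧ (∑ t, μ t) = 1)
    (R : Set (S × S)) :
    IsStrongSimPA trans L R ↔ IsStrongProbSimPA trans L R :=
  mdp_strongSim_iff_strongProbSim_general trans L hUnique R
end
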